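/- arXiv:1508.05231 — 4 statements merged into one kernel-verified Lean document; each statement's English description precedes it below -/
import Mathlib

section
/- If s > 0, then for any z₀ ∈ [0,1], the function z(t) = (x₀⁺(z₀ - x₀⁻) - x₀⁻(z₀ - x₀⁺) e^{-s(x₀⁺ - x₀⁻) t}) / ((z₀ - x₀⁻) - (z₀ - x₀⁺) e^{-s(x₀⁺ - x₀⁻) t}) satisfies z(0) = z₀ and z'(t) = F(z(t)) for all t ≥ 0 (the denominator never vanishes for t ≥ 0). -/
/-!
Factor `F x = -s (x - x₀⁻) (x - x₀⁺)` by Vieta. The Möbius expression is then the flow of this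
Riccati equation: with `E t = exp (-s (x₀⁺ - x₀⁻) t)` and `D` the denominator, one has
`z - x₀⁻ = (x₀⁺ - x₀⁻)(z₀ - x₀⁻)/D` and `z - x₀⁺ = (x₀⁺ - x₀⁻)(z₀ - x₀⁺)E/D`, and the quotient rule gives
exactly `-s` times their product. For `t ≥ 0` the denominator is the positive combination
`(z₀ - x₀⁻)(1 - E) + (x₀⁺ - x₀⁻)E`, since `x₀⁻ < 0 ≤ z₀` and `0 < E ≤ 1`.
-/

open Real

lemma neg_mul_sq_add_eq_mul_sub_mul_sub {s b c r : ℝ} (hs : s ≠ 0)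
    (hr : r ^ 2 = b ^ 2 + 4 * s * c) (x : ℝ) :
    -s * x ^ 2 + b * x + c = -s * (x - (b - r) / (2 * s)) * (x - (b + r) / (2 * s)) := by
  field_simp
  linear_combination -hr

lemma sub_sqrt_div_neg {s b c : ℝ} (hs : 0 < s) (hc : 0 < c) :
    (b - √(b ^ 2 + 4 * s * c)) / (2 * s) < 0 := by
  have hb : b < √(b ^ 2 + 4 * s * c) :=
    (le_abs_self b).trans_lt (lt_sqrt_of_sq_lt (by rw [sq_abs]; nlinarith))
  exact div_neg_of_neg_of_pos (by linarith) (by positivity)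

noncomputable def riccatiFlow (s m p z₀ t : ℝ) : ℝ :=
  (p * (z₀ - m) - m * (z₀ - p) * exp (-s * (p - m) * t)) /
    ((z₀ - m) - (z₀ - p) * exp (-s * (p - m) * t))

section RiccatiFlow

variable {s m p z₀ t : ℝ}

lemma riccatiFlow_zero (hmp : m ≠ p) : riccatiFlow s m p z₀ 0 = z₀ := by
  have hD : (z₀ - m) - (z₀ - p) ≠ 0 := by
    rw [sub_sub_sub_cancel_left]; exact sub_ne_zero.2 hmp.symm
  rw [riccatiFlow, mul_zero, exp_zero, mul_one, mul_one, div_eq_iff hD]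
  ring

lemma riccatiFlow_denom_pos (hs : 0 ≤ s) (hmp : m < p) (hmz : m ≤ z₀) (ht : 0 ≤ t) :
    0 < (z₀ - m) - (z₀ - p) * exp (-s * (p - m) * t) := by
  have hE0 : 0 < exp (-s * (p - m) * t) := exp_pos _
  have hE1 : exp (-s * (p - m) * t) ≤ 1 :=
    exp_le_one_iff.2 (by nlinarith [mul_nonneg (mul_nonneg hs (sub_nonneg.2 hmp.le)) ht])
  calc 0 < (z₀ - m) * (1 - exp (-s * (p - m) * t)) + (p - m) * exp (-s * (p - m) * t) := by
        nlinarith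
    _ = _ := by ring

lemma hasDerivAt_riccatiFlow (hD : (z₀ - m) - (z₀ - p) * exp (-s * (p - m) * t) ≠ 0) :
    HasDerivAt (riccatiFlow s m p z₀)
      (-s * (riccatiFlow s m p z₀ t - m) * (riccatiFlow s m p z₀ t - p)) t := by
  have hE : HasDerivAt (fun τ => exp (-s * (p - m) * τ))
      (exp (-s * (p - m) * t) * (-s * (p - m))) t := by
    simpa using ((hasDerivAt_id t).const_mul (-s * (p - m))).exp
  have hN := (hE.const_mul (m * (z₀ - p))).const_sub (p * (z₀ - m))
  have hD' := (hE.const_mul (z₀ - p)).const_sub (z₀ - m)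
  refine (hN.div hD' hD).congr_deriv ?_
  simp only [riccatiFlow]
  generalize exp (-s * (p - m) * t) = E at hD ⊢
  field_simp
  ring

end RiccatiFlow

theorem stmt_7_general (s u ν₀ : ℝ) (hs : 0 < s) (hu : 0 < u)
    (hν₀ : ν₀ ∈ Set.Ioo (0:ℝ) 1)
    (F : ℝ → ℝ) (hF : ∀ x, F x = -s * x ^ 2 + (s - u) * x + u * ν₀)
    (Δ x₀m x₀p : ℝ) (hΔ : Δ = (s - u) ^ 2 + 4 * s * u * ν₀)
    (hm : x₀m = (s - u - Real.sqrt Δ) / (2 * s))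
    (hp : x₀p = (s - u + Real.sqrt Δ) / (2 * s))
    (z₀ : ℝ) (hz₀ : z₀ ∈ Set.Icc (0:ℝ) 1)
    (z : ℝ → ℝ)
    (hz : ∀ t, z t = (x₀p * (z₀ - x₀m) - x₀m * (z₀ - x₀p) * Real.exp (-s * (x₀p - x₀m) * t)) /
      ((z₀ - x₀m) - (z₀ - x₀p) * Real.exp (-s * (x₀p - x₀m) * t))) :
    (∀ t, 0 ≤ t → (z₀ - x₀m) - (z₀ - x₀p) * Real.exp (-s * (x₀p - x₀m) * t) ≠ 0) ∧
    z 0 = z₀ ∧ ∀ t, 0 ≤ t → HasDerivAt z (F (z t)) t := by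
  have huν₀ : 0 < u * ν₀ := mul_pos hu hν₀.1
  rw [show 4 * s * u * ν₀ = 4 * s * (u * ν₀) by ring] at hΔ
  have hΔ_pos : 0 < Δ := by rw [hΔ]; positivity
  have hm_neg : x₀m < 0 := by rw [hm, hΔ]; exact sub_sqrt_div_neg hs huν₀
  have hmp : x₀m < x₀p := by
    rw [hm, hp]; gcongr; linarith [sqrt_pos.2 hΔ_pos]
  have hF_factor : ∀ x, F x = -s * (x - x₀m) * (x - x₀p) := fun x => by
    rw [hF, hm, hp]
    exact neg_mul_sq_add_eq_mul_sub_mul_sub hs.ne' (by rw [sq_sqrt hΔ_pos.le, hΔ]) x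
  have hD : ∀ t, 0 ≤ t → (z₀ - x₀m) - (z₀ - x₀p) * exp (-s * (x₀p - x₀m) * t) ≠ 0 :=
    fun t ht => (riccatiFlow_denom_pos hs.le hmp (by linarith [hz₀.1]) ht).ne'
  obtain rfl : z = riccatiFlow s x₀m x₀p z₀ := funext hz
  refine ⟨hD, riccatiFlow_zero hmp.ne, fun t ht => ?_⟩
  rw [hF_factor]
  exact hasDerivAt_riccatiFlow (hD t ht)

theorem stmt_7 (s u ν₀ ν₁ : ℝ) (hs : 0 < s) (hu : 0 < u)
    (hν₀ : ν₀ ∈ Set.Ioo (0:ℝ) 1) (hν₁ : ν₁ ∈ Set.Ioo (0:ℝ) 1) (hsum : ν₀ + ν₁ = 1)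
    (F : ℝ → ℝ) (hF : ∀ x, F x = -s * x ^ 2 + (s - u) * x + u * ν₀)
    (Δ x₀m x₀p : ℝ) (hΔ : Δ = (s - u) ^ 2 + 4 * s * u * ν₀)
    (hm : x₀m = (s - u - Real.sqrt Δ) / (2 * s))
    (hp : x₀p = (s - u + Real.sqrt Δ) / (2 * s))
    (z₀ : ℝ) (hz₀ : z₀ ∈ Set.Icc (0:ℝ) 1)
    (z : ℝ → ℝ)
    (hz : ∀ t, z t = (x₀p * (z₀ - x₀m) - x₀m * (z₀ - x₀p) * Real.exp (-s * (x₀p - x₀m) * t)) /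
      ((z₀ - x₀m) - (z₀ - x₀p) * Real.exp (-s * (x₀p - x₀m) * t))) :
    (∀ t, 0 ≤ t → (z₀ - x₀m) - (z₀ - x₀p) * Real.exp (-s * (x₀p - x₀m) * t) ≠ 0) ∧
    z 0 = z₀ ∧ ∀ t, 0 ≤ t → HasDerivAt z (F (z t)) t :=
  stmt_7_general s u ν₀ hs hu hν₀ F hF Δ x₀m x₀p hΔ hm hp z₀ hz₀ z hz
end

section
/- If y : [0,∞) → ℝ² solves the linear system y'(t) = y(t) A with y(0) = (z₀, 1-z₀), z₀ ∈ [0,1], and y₀(t) + y₁(t) > 0 for all t, then the ratio z(t) = y₀(t)/(y₀(t)+y₁(t)) satisfies z'(t) = F(z(t)), where F(x) = s x(1-x) + u ν₀ (1-x) - u ν₁ x. -/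
/-!
Writing `S = y₀ + y₁`, the quotient rule gives `z' = (y₀' y₁ - y₁' y₀) / S²`. For `y' = y A` with
`A = [[a, b], [c, d]]` this is the quadratic `(a - d) z (1 - z) + c (1 - z)² - b z²` in `z`, and for
the given `A` the terms `u ν₀ z (1 - z) + u ν₀ (1 - z)²` and `u ν₁ z (1 - z) + u ν₁ z²` collapse to
`u ν₀ (1 - z)` and `u ν₁ z`.
-/

theorem HasDerivAt.div_add_self {f g : ℝ → ℝ} {f' g' x : ℝ} (hf : HasDerivAt f f' x)
    (hg : HasDerivAt g g' x) (hfg : f x + g x ≠ 0) :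
    HasDerivAt (fun t => f t / (f t + g t)) ((f' * g x - g' * f x) / (f x + g x) ^ 2) x :=
  (hf.div (hf.add hg) hfg).congr_deriv (by simp only [Pi.add_apply]; ring)

theorem hasDerivAt_share_of_linear_system {a b c d x : ℝ} {y₀ y₁ : ℝ → ℝ}
    (hy₀ : HasDerivAt y₀ (a * y₀ x + c * y₁ x) x) (hy₁ : HasDerivAt y₁ (b * y₀ x + d * y₁ x) x)
    (hne : y₀ x + y₁ x ≠ 0) :
    HasDerivAt (fun t => y₀ t / (y₀ t + y₁ t))
      (let z := y₀ x / (y₀ x + y₁ x); (a - d) * z * (1 - z) + c * (1 - z) ^ 2 - b * z ^ 2) x := by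
  refine (hy₀.div_add_self hy₁ hne).congr_deriv ?_
  field_simp
  ring

theorem stmt_12_general (s u ν₀ ν₁ : ℝ)
    (F : ℝ → ℝ) (hF : ∀ x, F x = s * x * (1 - x) + u * ν₀ * (1 - x) - u * ν₁ * x)
    (y₀ y₁ : ℝ → ℝ)
    (hy₀ : ∀ t, 0 ≤ t → HasDerivAt y₀ ((1 + s - u * ν₁) * y₀ t + u * ν₀ * y₁ t) t)
    (hy₁ : ∀ t, 0 ≤ t → HasDerivAt y₁ (u * ν₁ * y₀ t + (1 - u * ν₀) * y₁ t) t)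
    (hpos : ∀ t, 0 ≤ t → 0 < y₀ t + y₁ t)
    (z : ℝ → ℝ) (hz : ∀ t, z t = y₀ t / (y₀ t + y₁ t)) :
    ∀ t, 0 ≤ t → HasDerivAt z (F (z t)) t := by
  intro t ht
  rw [funext hz, hF]
  exact (hasDerivAt_share_of_linear_system (hy₀ t ht) (hy₁ t ht) (hpos t ht).ne').congr_deriv
    (by ring)

theorem stmt_12 (s u ν₀ ν₁ : ℝ) (hs : 0 ≤ s) (hu : 0 ≤ u)
    (hν₀ : ν₀ ∈ Set.Ioo (0:ℝ) 1) (hν₁ : ν₁ ∈ Set.Ioo (0:ℝ) 1) (hsum : ν₀ + ν₁ = 1)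
    (F : ℝ → ℝ) (hF : ∀ x, F x = s * x * (1 - x) + u * ν₀ * (1 - x) - u * ν₁ * x)
    (z₀ : ℝ) (hz₀ : z₀ ∈ Set.Icc (0:ℝ) 1)
    (y₀ y₁ : ℝ → ℝ) (hy₀0 : y₀ 0 = z₀) (hy₁0 : y₁ 0 = 1 - z₀)
    (hy₀ : ∀ t, 0 ≤ t → HasDerivAt y₀ ((1 + s - u * ν₁) * y₀ t + u * ν₀ * y₁ t) t)
    (hy₁ : ∀ t, 0 ≤ t → HasDerivAt y₁ (u * ν₁ * y₀ t + (1 - u * ν₀) * y₁ t) t)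
    (hpos : ∀ t, 0 ≤ t → 0 < y₀ t + y₁ t)
    (z : ℝ → ℝ) (hz : ∀ t, z t = y₀ t / (y₀ t + y₁ t)) :
    ∀ t, 0 ≤ t → HasDerivAt z (F (z t)) t :=
  stmt_12_general s u ν₀ ν₁ F hF y₀ y₁ hy₀ hy₁ hpos z hz
end

section
/- For s > 0 and initial condition y(0) = (z₀, 1-z₀), the solution of y'(t) = y(t)A is given explicitly by y₀(t) = e^{(1+s x₀⁺)t}/(x₀⁺-x₀⁻) · (x₀⁺(z₀-x₀⁻) - x₀⁻(z₀-x₀⁺) e^{-s(x₀⁺-x₀⁻)t}) and y₁(t) = e^{(1+s x₀⁺)t}/(x₀⁺-x₀⁻) · ((1-x₀⁺)(z₀-x₀⁻) - (1-x₀⁻)(z₀-x₀⁺) e^{-s(x₀⁺-x₀⁻)t}); i.e. these functions satisfy y(0) = (z₀, 1-z₀) and y'(t) = y(t)A for all t ≥ 0. -/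
/-!
The row vector `(x, 1 - x)` is a left eigenvector of `A`, with eigenvalue `1 + s x`, when
`s x² - (s - u) x - u ν₀ = 0`, and the roots of this quadratic are `x₀±`. The claimed solution is the
combination of the two eigenmodes `e^{(1 + s x₀±) t} (x₀±, 1 - x₀±)` whose value at `0` is `(z₀, 1 - z₀)`.
-/

open Matrix Real

section LinearSystem

variable {n : Type*} [Fintype n] (A : Matrix n n ℝ)

theorem hasDerivAt_exp_smul_of_vecMul_eq_smul {v : n → ℝ} {l : ℝ} (hv : v ᵥ* A = l • v)
    (t : ℝ) : HasDerivAt (fun t => exp (l * t) • v) ((exp (l * t) • v) ᵥ* A) t := by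
  rw [smul_vecMul, hv, smul_smul]
  have hexp := (hasDerivAt_exp (l * t)).comp t ((hasDerivAt_id t).const_mul l)
  refine (hexp.smul_const v).congr_deriv ?_
  simp [mul_comm]

theorem hasDerivAt_sum_exp_smul {v w : n → ℝ} {l m : ℝ} (hv : v ᵥ* A = l • v)
    (hw : w ᵥ* A = m • w) (a b t : ℝ) :
    HasDerivAt (fun t => a • exp (l * t) • v + b • exp (m * t) • w)
      ((a • exp (l * t) • v + b • exp (m * t) • w) ᵥ* A) t := by
  rw [add_vecMul, smul_vecMul a, smul_vecMul b]
  exact ((hasDerivAt_exp_smul_of_vecMul_eq_smul A hv t).const_smul a).add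
    ((hasDerivAt_exp_smul_of_vecMul_eq_smul A hw t).const_smul b)

end LinearSystem

theorem vecMul_eq_smul_of_quadratic_root {s u ν₀ ν₁ : ℝ} (hsum : ν₀ + ν₁ = 1) {x : ℝ}
    (hx : s * (x * x) + -(s - u) * x + -(u * ν₀) = 0) :
    ![x, 1 - x] ᵥ* !![1 + s - u * ν₁, u * ν₁; u * ν₀, 1 - u * ν₀] = (1 + s * x) • ![x, 1 - x] := by
  ext i; fin_cases i <;> simp
  · linear_combination -hx - u * x * hsum
  · linear_combination hx + u * x * hsum

theorem sum_exp_smul_eq_explicit {p m s z : ℝ} (hpm : p ≠ m) (t : ℝ) :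
    ((z - m) / (p - m)) • exp ((1 + s * p) * t) • ![p, 1 - p] +
        ((p - z) / (p - m)) • exp ((1 + s * m) * t) • ![m, 1 - m] =
      ![exp ((1 + s * p) * t) / (p - m) * (p * (z - m) - m * (z - p) * exp (-s * (p - m) * t)),
        exp ((1 + s * p) * t) / (p - m) *
          ((1 - p) * (z - m) - (1 - m) * (z - p) * exp (-s * (p - m) * t))] := by
  have hexp : exp ((1 + s * m) * t) = exp ((1 + s * p) * t) * exp (-s * (p - m) * t) := by
    rw [← exp_add]; ring_nf
  have hpm' : p - m ≠ 0 := sub_ne_zero.mpr hpm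
  ext i; fin_cases i <;> simp [hexp] <;> field_simp <;> ring

theorem stmt_14_general (s u ν₀ ν₁ : ℝ) (hs : 0 < s) (hu : 0 < u)
    (hν₀ : ν₀ ∈ Set.Ioo (0:ℝ) 1) (hsum : ν₀ + ν₁ = 1)
    (Δ x₀m x₀p : ℝ) (hΔ : Δ = (s - u) ^ 2 + 4 * s * u * ν₀)
    (hm : x₀m = (s - u - Real.sqrt Δ) / (2 * s))
    (hp : x₀p = (s - u + Real.sqrt Δ) / (2 * s))
    (z₀ : ℝ)
    (y₀ y₁ : ℝ → ℝ)
    (hy₀ : ∀ t, y₀ t = Real.exp ((1 + s * x₀p) * t) / (x₀p - x₀m) *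
      (x₀p * (z₀ - x₀m) - x₀m * (z₀ - x₀p) * Real.exp (-s * (x₀p - x₀m) * t)))
    (hy₁ : ∀ t, y₁ t = Real.exp ((1 + s * x₀p) * t) / (x₀p - x₀m) *
      ((1 - x₀p) * (z₀ - x₀m) - (1 - x₀m) * (z₀ - x₀p) * Real.exp (-s * (x₀p - x₀m) * t))) :
    y₀ 0 = z₀ ∧ y₁ 0 = 1 - z₀ ∧
    (∀ t, 0 ≤ t → HasDerivAt y₀ ((1 + s - u * ν₁) * y₀ t + u * ν₀ * y₁ t) t) ∧
    (∀ t, 0 ≤ t → HasDerivAt y₁ (u * ν₁ * y₀ t + (1 - u * ν₀) * y₁ t) t) := by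
  have hΔpos : 0 < Δ := by rw [hΔ]; nlinarith [sq_nonneg (s - u), mul_pos (mul_pos hs hu) hν₀.1]
  have hdisc : discrim s (-(s - u)) (-(u * ν₀)) = √Δ * √Δ := by
    rw [mul_self_sqrt hΔpos.le, hΔ, discrim]; ring
  have hrootp := (quadratic_eq_zero_iff hs.ne' hdisc x₀p).2 (Or.inl (by rw [hp, neg_neg]))
  have hrootm := (quadratic_eq_zero_iff hs.ne' hdisc x₀m).2 (Or.inr (by rw [hm, neg_neg]))
  have hpm : x₀p ≠ x₀m := by
    rw [hp, hm]; intro h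
    field_simp at h
    linarith [sqrt_pos.2 hΔpos]
  have hsol : ∀ t, HasDerivAt (fun t => ![y₀ t, y₁ t])
      (![y₀ t, y₁ t] ᵥ* !![1 + s - u * ν₁, u * ν₁; u * ν₀, 1 - u * ν₀]) t := by
    have hY : ∀ t, ![y₀ t, y₁ t] =
        ((z₀ - x₀m) / (x₀p - x₀m)) • exp ((1 + s * x₀p) * t) • ![x₀p, 1 - x₀p] +
          ((x₀p - z₀) / (x₀p - x₀m)) • exp ((1 + s * x₀m) * t) • ![x₀m, 1 - x₀m] := by
      intro t; rw [sum_exp_smul_eq_explicit hpm, hy₀, hy₁]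
    intro t
    simp only [hY]
    exact hasDerivAt_sum_exp_smul _ (vecMul_eq_smul_of_quadratic_root hsum hrootp)
      (vecMul_eq_smul_of_quadratic_root hsum hrootm) _ _ t
  have hpm' : x₀p - x₀m ≠ 0 := sub_ne_zero.mpr hpm
  refine ⟨?_, ?_, fun t _ => ?_, fun t _ => ?_⟩
  · rw [hy₀]; simp only [mul_zero, exp_zero]; field_simp; ring
  · rw [hy₁]; simp only [mul_zero, exp_zero]; field_simp; ring
  · exact (hasDerivAt_pi.1 (hsol t) 0).congr_deriv (by simp; ring)
  · exact (hasDerivAt_pi.1 (hsol t) 1).congr_deriv (by simp; ring)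

theorem stmt_14 (s u ν₀ ν₁ : ℝ) (hs : 0 < s) (hu : 0 < u)
    (hν₀ : ν₀ ∈ Set.Ioo (0:ℝ) 1) (hν₁ : ν₁ ∈ Set.Ioo (0:ℝ) 1) (hsum : ν₀ + ν₁ = 1)
    (Δ x₀m x₀p : ℝ) (hΔ : Δ = (s - u) ^ 2 + 4 * s * u * ν₀)
    (hm : x₀m = (s - u - Real.sqrt Δ) / (2 * s))
    (hp : x₀p = (s - u + Real.sqrt Δ) / (2 * s))
    (z₀ : ℝ) (hz₀ : z₀ ∈ Set.Icc (0:ℝ) 1)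
    (y₀ y₁ : ℝ → ℝ)
    (hy₀ : ∀ t, y₀ t = Real.exp ((1 + s * x₀p) * t) / (x₀p - x₀m) *
      (x₀p * (z₀ - x₀m) - x₀m * (z₀ - x₀p) * Real.exp (-s * (x₀p - x₀m) * t)))
    (hy₁ : ∀ t, y₁ t = Real.exp ((1 + s * x₀p) * t) / (x₀p - x₀m) *
      ((1 - x₀p) * (z₀ - x₀m) - (1 - x₀m) * (z₀ - x₀p) * Real.exp (-s * (x₀p - x₀m) * t))) :
    y₀ 0 = z₀ ∧ y₁ 0 = 1 - z₀ ∧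
    (∀ t, 0 ≤ t → HasDerivAt y₀ ((1 + s - u * ν₁) * y₀ t + u * ν₀ * y₁ t) t) ∧
    (∀ t, 0 ≤ t → HasDerivAt y₁ (u * ν₁ * y₀ t + (1 - u * ν₀) * y₁ t) t) :=
  stmt_14_general s u ν₀ ν₁ hs hu hν₀ hsum Δ x₀m x₀p hΔ hm hp z₀ y₀ y₁ hy₀ hy₁
end

section
/- If s > 0 and z₀ ∈ [0,1] with z₀ ≠ x₀⁺, then the denominator D(t) = (z₀ - x₀⁻) - (z₀ - x₀⁺) e^{-s(x₀⁺-x₀⁻)t} of the explicit Riccati solution is strictly positive for all t ≥ 0. -/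
/-! Both roots satisfy `x₀⁻ < x₀⁺` and `x₀⁻ < 0 ≤ z₀`, and for `t ≥ 0` the factor
`e = exp (-s (x₀⁺ - x₀⁻) t)` lies in `(0, 1]`. Hence
`D(t) = (z₀ - x₀⁻) (1 - e) + (x₀⁺ - x₀⁻) e` is a sum of a nonnegative and a positive term. -/

lemma sub_sub_mul_pos_of_le_one {a b z e : ℝ} (hab : a < b) (haz : a < z)
    (he₀ : 0 < e) (he₁ : e ≤ 1) : 0 < (z - a) - (z - b) * e := by
  have hsplit : (z - a) - (z - b) * e = (z - a) * (1 - e) + (b - a) * e := by ring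
  rw [hsplit]
  exact add_pos_of_nonneg_of_pos (mul_nonneg (sub_pos.2 haz).le (sub_nonneg.2 he₁))
    (mul_pos (sub_pos.2 hab) he₀)

section QuadraticRoots

variable {s u Δ : ℝ}

lemma abs_sub_lt_sqrt (hΔ : (s - u) ^ 2 < Δ) : |s - u| < √Δ :=
  (Real.lt_sqrt (abs_nonneg _)).2 (by rwa [sq_abs])

lemma smaller_root_neg (hs : 0 < s) (hΔ : (s - u) ^ 2 < Δ) :
    (s - u - √Δ) / (2 * s) < 0 :=
  div_neg_of_neg_of_pos (by linarith [(abs_lt.1 (abs_sub_lt_sqrt hΔ)).2]) (by positivity)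

lemma smaller_root_lt_larger_root (hs : 0 < s) (hΔ : (s - u) ^ 2 < Δ) :
    (s - u - √Δ) / (2 * s) < (s - u + √Δ) / (2 * s) := by
  have hsqrt : 0 < √Δ := (abs_nonneg _).trans_lt (abs_sub_lt_sqrt hΔ)
  exact div_lt_div_of_pos_right (by linarith) (by positivity)

end QuadraticRoots

theorem stmt_18_general (s u ν₀ : ℝ) (hs : 0 < s) (hu : 0 < u)
    (hν₀ : ν₀ ∈ Set.Ioo (0:ℝ) 1)
    (Δ x₀m x₀p : ℝ) (hΔ : Δ = (s - u) ^ 2 + 4 * s * u * ν₀)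
    (hm : x₀m = (s - u - Real.sqrt Δ) / (2 * s))
    (hp : x₀p = (s - u + Real.sqrt Δ) / (2 * s))
    (z₀ : ℝ) (hz₀ : z₀ ∈ Set.Icc (0:ℝ) 1) :
    ∀ t, 0 ≤ t → 0 < (z₀ - x₀m) - (z₀ - x₀p) * Real.exp (-s * (x₀p - x₀m) * t) := by
  intro t ht
  have hdisc : (s - u) ^ 2 < Δ := by
    rw [hΔ]
    have : 0 < 4 * s * u * ν₀ := by have := hν₀.1; positivity
    linarith
  have hroots : x₀m < x₀p := hm ▸ hp ▸ smaller_root_lt_larger_root hs hdisc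
  have hmz : x₀m < z₀ := (hm ▸ smaller_root_neg hs hdisc).trans_le hz₀.1
  have hexp : Real.exp (-s * (x₀p - x₀m) * t) ≤ 1 := by
    refine Real.exp_le_one_iff.2 ?_
    have : 0 ≤ s * (x₀p - x₀m) * t := by have := sub_pos.2 hroots; positivity
    linarith
  exact sub_sub_mul_pos_of_le_one hroots hmz (Real.exp_pos _) hexp

theorem stmt_18 (s u ν₀ ν₁ : ℝ) (hs : 0 < s) (hu : 0 < u)
    (hν₀ : ν₀ ∈ Set.Ioo (0:ℝ) 1) (hν₁ : ν₁ ∈ Set.Ioo (0:ℝ) 1) (hsum : ν₀ + ν₁ = 1)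
    (Δ x₀m x₀p : ℝ) (hΔ : Δ = (s - u) ^ 2 + 4 * s * u * ν₀)
    (hm : x₀m = (s - u - Real.sqrt Δ) / (2 * s))
    (hp : x₀p = (s - u + Real.sqrt Δ) / (2 * s))
    (z₀ : ℝ) (hz₀ : z₀ ∈ Set.Icc (0:ℝ) 1) (hne : z₀ ≠ x₀p) :
    ∀ t, 0 ≤ t → 0 < (z₀ - x₀m) - (z₀ - x₀p) * Real.exp (-s * (x₀p - x₀m) * t) :=
  stmt_18_general s u ν₀ hs hu hν₀ Δ x₀m x₀p hΔ hm hp z₀ hz₀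
end
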